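/- arXiv:math/0701460 — 2 statements merged into one kernel-verified Lean document; each statement's English description precedes it below -/
import Mathlib

section
/- If P is the rank-2 lattice with Gram matrix [[2,1],[1,3]], then P does not embed isometrically into Z^2, but P ⊕ P embeds isometrically into Z^4. In particular, an isometric embedding of P ⊕ P into D_n ⊕ D_n does not imply an isometric embedding of P into D_n. -/
/-- The lattice `P` with Gram matrix [[2,1],[1,3]] does not embed isometrically into ℤ²,
but the orthogonal direct sum `P ⊕ P` embeds isometrically into ℤ⁴.  An embedding of `P`
is recorded by images `v, w` of the two basis vectors realizing the Gram matrix, and an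
embedding of `P ⊕ P` by images `a₁, b₁, a₂, b₂` realizing the block-diagonal Gram matrix. -/
theorem P_not_in_Z2_but_PP_in_Z4 :
    (¬ ∃ v w : Fin 2 → ℤ,
        (∑ i, v i * v i) = 2 ∧ (∑ i, w i * w i) = 3 ∧ (∑ i, v i * w i) = 1) ∧
    (∃ a₁ b₁ a₂ b₂ : Fin 4 → ℤ,
        (∑ i, a₁ i * a₁ i) = 2 ∧ (∑ i, b₁ i * b₁ i) = 3 ∧ (∑ i, a₁ i * b₁ i) = 1 ∧
        (∑ i, a₂ i * a₂ i) = 2 ∧ (∑ i, b₂ i * b₂ i) = 3 ∧ (∑ i, a₂ i * b₂ i) = 1 ∧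
        (∑ i, a₁ i * a₂ i) = 0 ∧ (∑ i, a₁ i * b₂ i) = 0 ∧
        (∑ i, b₁ i * a₂ i) = 0 ∧ (∑ i, b₁ i * b₂ i) = 0) := by
  constructor
  · rintro ⟨v, w, -, h3, -⟩
    simp only [Fin.sum_univ_two] at h3
    set a := w 0
    set b := w 1
    have ha1 : a ≤ 1 := by nlinarith [sq_nonneg b, sq_nonneg (a - 1)]
    have ha2 : -1 ≤ a := by nlinarith [sq_nonneg b, sq_nonneg (a + 1)]
    have hb1 : b ≤ 1 := by nlinarith [sq_nonneg a, sq_nonneg (b - 1)]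
    have hb2 : -1 ≤ b := by nlinarith [sq_nonneg a, sq_nonneg (b + 1)]
    interval_cases a <;> interval_cases b <;> omega
  · refine ⟨![1,1,0,0], ![1,0,1,1], ![0,0,1,-1], ![1,-1,0,-1], ?_, ?_, ?_, ?_, ?_, ?_, ?_, ?_, ?_, ?_⟩ <;> decide
end

section
/- Let p be a prime and A a finite abelian group whose p-primary subgroup is cyclic of order p^m, with |A| = p^m·s and gcd(p,s) = 1. If G is a subgroup of A^n with |G|^2 = |A|^n (n even), then G contains an element whose order is divisible by p^⌈m/2⌉. -/
/-- Let `p` be a prime and `A` a finite abelian group whose `p`-primary subgroup is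
cyclic of order `p^m`, with `|A| = p^m·s`, `gcd(p,s) = 1`.  If `G ≤ Aⁿ` (`n` even,
positive) satisfies `|G|² = |A|ⁿ`, then `G` contains an element whose order is
divisible by `p^⌈m/2⌉`. -/
theorem element_of_large_p_order {A : Type*} [CommGroup A] [Fintype A]
    {p m s : ℕ} (hp : Fact p.Prime) (hm : 0 < m)
    (hcard : Fintype.card A = p ^ m * s) (hgcd : Nat.gcd p s = 1)
    (hcyc : ∀ P : Sylow p A, IsCyclic (P : Subgroup A))
    {n : ℕ} (hn : Even n) (hn0 : 0 < n)
    (G : Subgroup (Fin n → A)) (hG : Nat.card G ^ 2 = Fintype.card A ^ n) :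
    ∃ g ∈ G, p ^ ((m + 1) / 2) ∣ orderOf g := by
  classical
  by_contra hcon
  push_neg at hcon
  obtain ⟨t, ht⟩ := hn
  have ht0 : 0 < t := by omega
  have hn2 : n = t + t := ht
  set k : ℕ := (m - 1) / 2 with hk
  have hps : ¬ p ∣ s := fun h => hp.out.ne_one (Nat.dvd_one.mp (hgcd ▸ Nat.dvd_gcd dvd_rfl h))
  have hs0 : s ≠ 0 := by
    intro h; rw [h, mul_zero] at hcard; exact (Fintype.card_pos (α := A)).ne' hcard
  -- p-adic valuation of |G|
  have hfact : (Nat.card G).factorization p = m * t := by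
    have key : ((Nat.card G) ^ 2).factorization p = ((p ^ m * s) ^ n).factorization p := by
      rw [hG, hcard]
    rw [Nat.factorization_pow, Nat.factorization_pow, Finsupp.smul_apply, Finsupp.smul_apply,
      Nat.factorization_mul (pow_ne_zero _ hp.out.pos.ne') hs0, Finsupp.add_apply,
      hp.out.factorization_pow, Finsupp.single_eq_same,
      Nat.factorization_eq_zero_of_not_dvd hps] at key
    rw [smul_eq_mul, smul_eq_mul] at key
    have key2 : n * (m + 0) = 2 * (m * t) := by rw [hn2]; ring
    omega
  -- a Sylow p-subgroup of G
  obtain ⟨Q⟩ : Nonempty (Sylow p ↥G) := inferInstance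
  have hQcard : Nat.card Q = p ^ (m * t) := by
    rw [Q.card_eq_multiplicity, hfact]
  -- every element of Q has p-power order at most p^k
  have hQpow : ∀ x : ↥(Q : Subgroup ↥G), ((x : ↥G) : Fin n → A) ^ p ^ k = 1 := by
    intro x
    set g : Fin n → A := ((x : ↥G) : Fin n → A) with hg
    have hgG : g ∈ G := (x : ↥G).2
    obtain ⟨j, hj⟩ := Q.isPGroup' x
    have hdvd : orderOf g ∣ p ^ j := by
      have : orderOf g = orderOf x := by
        rw [hg, Subgroup.orderOf_coe (H := G), Subgroup.orderOf_coe]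
      rw [this]
      exact orderOf_dvd_of_pow_eq_one hj
    obtain ⟨i, hik, hi⟩ := (Nat.dvd_prime_pow hp.out).mp hdvd
    have hnotdvd := hcon g hgG
    have hik' : i ≤ k := by
      by_contra hlt
      exact hnotdvd (hi ▸ pow_dvd_pow p (by omega))
    exact orderOf_dvd_iff_pow_eq_one.mp (hi ▸ pow_dvd_pow p hik')
  -- the unique Sylow p-subgroup of A
  haveI : Unique (Sylow p A) := Sylow.unique_of_normal default inferInstance
  set PA : Sylow p A := default with hPA
  have hmemPA : ∀ a : A, a ^ p ^ k = 1 → a ∈ (PA : Subgroup A) := by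
    intro a ha
    have hpg : IsPGroup p (Subgroup.zpowers a) := by
      intro g
      refine ⟨k, ?_⟩
      obtain ⟨z, hz⟩ := g.2
      ext
      push_cast
      rw [← hz, ← zpow_natCast, ← zpow_mul, mul_comm, zpow_mul, zpow_natCast, ha, one_zpow]
    obtain ⟨Q', hQ'⟩ := hpg.exists_le_sylow
    have : Q' = PA := Subsingleton.elim _ _
    exact this ▸ hQ' (Subgroup.mem_zpowers a)
  -- count elements of A killed by p^k
  haveI : IsCyclic ↥(PA : Subgroup A) := hcyc PA
  have hScard : Nat.card {a : A // a ^ p ^ k = 1} ≤ p ^ k := by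
    have hle : Nat.card {a : A // a ^ p ^ k = 1} ≤
        Nat.card {b : ↥(PA : Subgroup A) // b ^ p ^ k = 1} := by
      apply Nat.card_le_card_of_injective
        (fun a => (⟨⟨a.1, hmemPA a.1 a.2⟩, by ext; exact a.2⟩ :
          {b : ↥(PA : Subgroup A) // b ^ p ^ k = 1}))
      intro a b hab
      ext
      exact congrArg (fun x => ((x.1 : ↥(PA : Subgroup A)) : A)) hab
    refine hle.trans ?_
    have := IsCyclic.card_pow_eq_one_le (α := ↥(PA : Subgroup A))
      (n := p ^ k) (pow_pos hp.out.pos k)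
    rw [Nat.card_eq_fintype_card, Fintype.card_subtype]
    convert this using 2
  -- the injection from Q into n-tuples of p^k-torsion elements
  have hinj : Nat.card Q ≤ Nat.card (Fin n → {a : A // a ^ p ^ k = 1}) := by
    apply Nat.card_le_card_of_injective
      (fun (x : ↥(Q : Subgroup ↥G)) i => (⟨((x : ↥G) : Fin n → A) i, by
        have := congrFun (hQpow x) i
        simpa using this⟩ : {a : A // a ^ p ^ k = 1}))
    intro x y hxy
    have : ((x : ↥G) : Fin n → A) = ((y : ↥G) : Fin n → A) := by
      funext i
      exact congrArg Subtype.val (congrFun hxy i)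
    ext
    exact congrFun this _
  have hcardfun : Nat.card (Fin n → {a : A // a ^ p ^ k = 1}) ≤ p ^ (k * n) := by
    rw [Nat.card_fun, Nat.card_eq_fintype_card (α := Fin n), Fintype.card_fin, pow_mul]
    exact Nat.pow_le_pow_left hScard n
  rw [hQcard] at hinj
  have hle : m * t ≤ k * n := (Nat.pow_le_pow_iff_right hp.out.one_lt).mp
    (hinj.trans hcardfun)
  have h1 : k * n = (2 * k) * t := by rw [hn2]; ring
  have h2 : (2 * k) * t ≤ (m - 1) * t := Nat.mul_le_mul_right t (by omega)
  have h3 : (m - 1) * t < m * t := (Nat.mul_lt_mul_right ht0).mpr (by omega)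
  omega
end
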